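/- Define f₀ : ℝ² → ℝ³ by f₀(ρ, φ) = (2ρ·cos φ, 2ρ·sin φ, √2·ρ²). Then f₀ is smooth and for every (ρ, φ) ∈ ℝ² and every (v₁, v₂) ∈ ℝ²: ‖Df₀(ρ,φ)(v₁,v₂)‖² = 4(1 + 2ρ²)·v₁² + 4ρ²·v₂². Moreover f₀ is strictly short for the hyperbolic metric: for every ρ ∈ (0,1), every φ, and every (v₁, v₂) ≠ (0,0), 4(1 + 2ρ²)·v₁² + 4ρ²·v₂² < 4·(v₁² + ρ²·v₂²)/(1 − ρ²)². -/

import Mathlib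

/-!
The Jacobian of `f₀` has columns `(2cos φ, 2sin φ, 2√2ρ)` and `(-2ρ sin φ, 2ρ cos φ, 0)`, which are
orthogonal with squared lengths `4 + 8ρ²` and `4ρ²`; this is the pullback metric. After clearing
the denominator `(1 - ρ²)²`, strict shortness comes down to the coefficientwise inequalities
`(1 + 2ρ²)(1 - ρ²)² = 1 - ρ⁴(3 - 2ρ²) < 1` and `ρ²(1 - ρ²)² < ρ²` for `0 < ρ < 1`.
-/

noncomputable section

abbrev E3 := EuclideanSpace ℝ (Fin 3)

open Real ContinuousLinearMap

def polarParaboloid (p : ℝ × ℝ) : E3 :=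
  !₂[2 * p.1 * cos p.2, 2 * p.1 * sin p.2, √2 * p.1 ^ 2]

def polarParaboloidDeriv (p : ℝ × ℝ) : ℝ × ℝ →L[ℝ] E3 :=
  (EuclideanSpace.equiv (Fin 3) ℝ).symm.toContinuousLinearMap ∘L ContinuousLinearMap.pi ![
    (2 * cos p.2) • fst ℝ ℝ ℝ - (2 * p.1 * sin p.2) • snd ℝ ℝ ℝ,
    (2 * sin p.2) • fst ℝ ℝ ℝ + (2 * p.1 * cos p.2) • snd ℝ ℝ ℝ,
    (2 * √2 * p.1) • fst ℝ ℝ ℝ]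

theorem polarParaboloidDeriv_apply (p v : ℝ × ℝ) :
    polarParaboloidDeriv p v = !₂[2 * cos p.2 * v.1 - 2 * p.1 * sin p.2 * v.2,
      2 * sin p.2 * v.1 + 2 * p.1 * cos p.2 * v.2, 2 * √2 * p.1 * v.1] := by
  ext i; fin_cases i <;> simp [polarParaboloidDeriv]

theorem hasFDerivAt_const_mul_fst_mul_comp_snd (c : ℝ) {h : ℝ → ℝ} {h' : ℝ} {p : ℝ × ℝ}
    (hh : HasDerivAt h h' p.2) :
    HasFDerivAt (fun q : ℝ × ℝ => c * q.1 * h q.2)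
      ((c * h p.2) • fst ℝ ℝ ℝ + (c * p.1 * h') • snd ℝ ℝ ℝ) p := by
  refine ((hasFDerivAt_fst.const_mul c).fun_mul
    (hh.comp_hasFDerivAt p hasFDerivAt_snd)).congr_fderiv ?_
  ext <;> simp; ring

theorem hasFDerivAt_polarParaboloid (p : ℝ × ℝ) :
    HasFDerivAt polarParaboloid (polarParaboloidDeriv p) p := by
  rw [← hasFDerivWithinAt_univ, hasFDerivWithinAt_euclidean]
  intro i
  rw [hasFDerivWithinAt_univ]
  fin_cases i
  · refine (hasFDerivAt_const_mul_fst_mul_comp_snd 2 (hasDerivAt_cos p.2)).congr_fderiv ?_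
    ext <;> simp [polarParaboloidDeriv_apply]
  · refine (hasFDerivAt_const_mul_fst_mul_comp_snd 2 (hasDerivAt_sin p.2)).congr_fderiv ?_
    ext <;> simp [polarParaboloidDeriv_apply]
  · refine ((hasFDerivAt_fst.pow 2).const_mul √2).congr_fderiv ?_
    ext <;> simp [polarParaboloidDeriv_apply]; ring

theorem contDiff_polarParaboloid : ContDiff ℝ ⊤ polarParaboloid := by
  refine contDiff_euclidean.2 fun i => ?_
  fin_cases i
  · exact (contDiff_const.mul contDiff_fst).mul (contDiff_cos.comp contDiff_snd)
  · exact (contDiff_const.mul contDiff_fst).mul (contDiff_sin.comp contDiff_snd)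
  · exact contDiff_const.mul (contDiff_fst.pow 2)

theorem norm_polarParaboloidDeriv_sq (p v : ℝ × ℝ) :
    ‖polarParaboloidDeriv p v‖ ^ 2 = 4 * (1 + 2 * p.1 ^ 2) * v.1 ^ 2 + 4 * p.1 ^ 2 * v.2 ^ 2 := by
  rw [EuclideanSpace.real_norm_sq_eq, Fin.sum_univ_three, polarParaboloidDeriv_apply]
  simp only [Matrix.cons_val_zero, Matrix.cons_val_one, Matrix.cons_val]
  linear_combination (4 * v.1 ^ 2 + 4 * p.1 ^ 2 * v.2 ^ 2) * sin_sq_add_cos_sq p.2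
    + (4 * p.1 ^ 2 * v.1 ^ 2) * sq_sqrt (zero_le_two (α := ℝ))

theorem polarParaboloid_metric_lt_hyperbolic {ρ v₁ v₂ : ℝ} (h0 : 0 < ρ) (h1 : ρ < 1)
    (hv : (v₁, v₂) ≠ (0, 0)) :
    4 * (1 + 2 * ρ ^ 2) * v₁ ^ 2 + 4 * ρ ^ 2 * v₂ ^ 2
      < 4 * (v₁ ^ 2 + ρ ^ 2 * v₂ ^ 2) / (1 - ρ ^ 2) ^ 2 := by
  have hr₀ : 0 < ρ ^ 2 := by positivity
  have hr₁ : ρ ^ 2 < 1 := pow_lt_one₀ h0.le h1 two_ne_zero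
  have hcoeff₁ : (1 + 2 * ρ ^ 2) * (1 - ρ ^ 2) ^ 2 < 1 := by
    have : 0 < (ρ ^ 2) ^ 2 * (3 - 2 * ρ ^ 2) := mul_pos (by positivity) (by linarith)
    linear_combination this
  have hcoeff₂ : ρ ^ 2 * (1 - ρ ^ 2) ^ 2 < ρ ^ 2 := by
    have : (1 - ρ ^ 2) ^ 2 < 1 := pow_lt_one₀ (by linarith) (by linarith) two_ne_zero
    exact mul_lt_of_lt_one_right hr₀ this
  rw [lt_div_iff₀ (pow_pos (sub_pos.2 hr₁) 2)]
  rcases not_and_or.mp (by simpa using hv : ¬(v₁ = 0 ∧ v₂ = 0)) with hv₁ | hv₂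
  · linarith [mul_pos (sub_pos.2 hcoeff₁) (by positivity : 0 < v₁ ^ 2),
      mul_nonneg (sub_pos.2 hcoeff₂).le (sq_nonneg v₂)]
  · linarith [mul_nonneg (sub_pos.2 hcoeff₁).le (sq_nonneg v₁),
      mul_pos (sub_pos.2 hcoeff₂) (by positivity : 0 < v₂ ^ 2)]

theorem stmt18 (f₀ : ℝ × ℝ → E3)
    (hf₀ : ∀ p : ℝ × ℝ,
      f₀ p = (WithLp.equiv 2 (Fin 3 → ℝ)).symm
        ![2 * p.1 * Real.cos p.2, 2 * p.1 * Real.sin p.2, Real.sqrt 2 * p.1 ^ 2]) :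
    ContDiff ℝ (⊤ : ℕ∞) f₀ ∧
    (∀ p v : ℝ × ℝ,
      ‖fderiv ℝ f₀ p v‖ ^ 2 = 4 * (1 + 2 * p.1 ^ 2) * v.1 ^ 2 + 4 * p.1 ^ 2 * v.2 ^ 2) ∧
    (∀ ρ φ v₁ v₂ : ℝ, 0 < ρ → ρ < 1 → (v₁, v₂) ≠ ((0 : ℝ), (0 : ℝ)) →
      4 * (1 + 2 * ρ ^ 2) * v₁ ^ 2 + 4 * ρ ^ 2 * v₂ ^ 2
        < 4 * (v₁ ^ 2 + ρ ^ 2 * v₂ ^ 2) / (1 - ρ ^ 2) ^ 2) := by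
  obtain rfl : f₀ = polarParaboloid := funext hf₀
  refine ⟨contDiff_polarParaboloid.of_le le_top, fun p v => ?_,
    fun ρ _ v₁ v₂ h0 h1 hv => polarParaboloid_metric_lt_hyperbolic h0 h1 hv⟩
  rw [(hasFDerivAt_polarParaboloid p).fderiv, norm_polarParaboloidDeriv_sq]
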